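/- arXiv:1502.03775 — 2 statements merged into one kernel-verified Lean document; each statement's English description precedes it below -/
import Mathlib

section
/- Let w be a log-convex weight function on [0,1). Then there exists a sequence (a_k)_{k≥0} of real numbers such that Σ_{k=0}^∞ a_k² r^{2k} ≍ w(r)² for 0 ≤ r < 1, with the series converging uniformly on compact subsets of [0,1). -/
open MeasureTheory Set Metric

noncomputable section

/-- The open unit ball of `ℝ^d` (as `EuclideanSpace`). -/
def unitBall (d : ℕ) : Set (EuclideanSpace ℝ (Fin d)) := Metric.ball 0 1

/-- `f` is harmonic on `s ⊆ ℝ^d`: it is `C²` on a neighborhood-like set and its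
Laplacian (sum of second derivatives in the coordinate directions) vanishes on `s`. -/
def IsHarmonicOn {d : ℕ} (f : EuclideanSpace ℝ (Fin d) → ℝ)
    (s : Set (EuclideanSpace ℝ (Fin d))) : Prop :=
  ContDiffOn ℝ 2 f s ∧ ∀ x ∈ s,
    ∑ i : Fin d, fderiv ℝ (fun y => fderiv ℝ f y (EuclideanSpace.single i 1)) x
      (EuclideanSpace.single i 1) = 0

/-- A weight function: positive, non-decreasing, continuous and unbounded on `[0,1)`. -/
def IsWeight (w : ℝ → ℝ) : Prop :=
  ContinuousOn w (Set.Ico 0 1) ∧ MonotoneOn w (Set.Ico 0 1) ∧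
    (∀ r ∈ Set.Ico (0:ℝ) 1, 0 < w r) ∧
    ∀ M : ℝ, ∃ r ∈ Set.Ico (0:ℝ) 1, M < w r

/-- `w` is log-convex: `log (w r)` is a convex function of `log r` on `(0,1)`. -/
def IsLogConvex (w : ℝ → ℝ) : Prop :=
  ConvexOn ℝ (Set.Iio (0:ℝ)) (fun t => Real.log (w (Real.exp t)))

/-- Two functions are equivalent on `[0,1)`. -/
def EquivOn01 (w v : ℝ → ℝ) : Prop :=
  ∃ c₁ c₂ : ℝ, 0 < c₁ ∧ 0 < c₂ ∧
    ∀ r ∈ Set.Ico (0:ℝ) 1, c₁ * v r ≤ w r ∧ w r ≤ c₂ * v r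

/-- The normalized surface measure on the unit sphere of `ℝ^d`. -/
def sphereMeasure (d : ℕ) : Measure (Metric.sphere (0 : EuclideanSpace ℝ (Fin d)) 1) :=
  ((volume : Measure (EuclideanSpace ℝ (Fin d))).toSphere Set.univ)⁻¹ •
    (volume : Measure (EuclideanSpace ℝ (Fin d))).toSphere

/-- The squared `L²`-mean of `f` on the sphere of radius `r`. -/
def M2sq {d : ℕ} (f : EuclideanSpace ℝ (Fin d) → ℝ) (r : ℝ) : ℝ :=
  ∫ y : Metric.sphere (0 : EuclideanSpace ℝ (Fin d)) 1,
    (f (r • (y : EuclideanSpace ℝ (Fin d))))^2 ∂(sphereMeasure d)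


/-!
Put `t = 2 log r` and `φ t = 2 log w(e^{t/2})`, a convex nondecreasing function of `t < 0` tending
to `∞` at `0`; the series becomes `∑ b_k e^{k t}` and `w(r)²` becomes `e^{φ t}`. With
`b_k = e^{-φ*(k)}`, `φ*` the Legendre conjugate of `φ` on `[a, 0)`, each monomial equals
`e^{φ t - gap_k t}`, where `gap_k t ≥ 0` is the height of `φ` above its tangent of slope `k`.
Summing over all `k` fails at corners of `φ`, where many slopes touch at once, so only the slopes of
a greedy cover are kept: `[a, 0)` is cut into intervals `[θ_n, θ_{n+1})`, on the `n`-th of which the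
tangent of slope `κ_n` stays within `1 - a` of `φ`, `κ_n` being chosen to stay valid longest.
By maximality, the gap of `κ_i` grows by at least `1` per interval away from its own, so at
`t ∈ [θ_I, θ_{I+1})` the sum `∑_i e^{-gap_{κ_i} t}` is dominated by a two-sided geometric series,
while the term `i = I` bounds it from below. A constant term takes care of `r < 1/2`.
-/

open Filter Topology Real

theorem ConvexOn.add_rightDeriv_mul_sub_le {S : Set ℝ} {f : ℝ → ℝ} {x y : ℝ}
    (hf : ConvexOn ℝ S f) (hx : x ∈ interior S) (hy : y ∈ S) :
    f x + derivWithin f (Ioi x) x * (y - x) ≤ f y := by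
  rcases lt_trichotomy y x with hyx | rfl | hxy
  · have h := (hf.slope_le_leftDeriv_of_mem_interior hy hx hyx).trans
      (hf.leftDeriv_le_rightDeriv_of_mem_interior hx)
    rw [slope_def_field, div_le_iff₀ (sub_pos.2 hyx)] at h
    linarith
  · simp
  · have h := hf.rightDeriv_le_slope_of_mem_interior hx hy hxy
    rw [slope_def_field, le_div_iff₀ (sub_pos.2 hxy)] at h
    linarith

theorem exp_neg_abs_natCast_add_sub (I n : ℕ) :
    exp (-|((n + I : ℕ) : ℝ) - I|) = exp (-1) ^ n := by
  rw [← exp_nat_mul]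
  push_cast
  rw [add_sub_cancel_right, abs_of_nonneg n.cast_nonneg]
  ring_nf

theorem summable_exp_neg_abs_sub (I : ℕ) : Summable fun i : ℕ => exp (-|(i : ℝ) - I|) := by
  rw [← summable_nat_add_iff I]
  simpa only [exp_neg_abs_natCast_add_sub] using
    summable_geometric_of_lt_one (exp_pos (-1)).le (exp_lt_one_iff.2 neg_one_lt_zero)

theorem tsum_exp_neg_abs_sub_le (I : ℕ) :
    ∑' i : ℕ, exp (-|(i : ℝ) - I|) ≤ 2 / (1 - exp (-1)) := by
  have hq0 := (exp_pos (-1)).le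
  have hq1 : exp (-1) < 1 := exp_lt_one_iff.2 neg_one_lt_zero
  rw [← (summable_exp_neg_abs_sub I).sum_add_tsum_nat_add I]
  simp only [exp_neg_abs_natCast_add_sub, tsum_geometric_of_lt_one hq0 hq1]
  have hhead : ∑ i ∈ Finset.range I, exp (-|(i : ℝ) - I|) ≤ (1 - exp (-1))⁻¹ := by
    rw [← Finset.sum_range_reflect]
    calc ∑ j ∈ Finset.range I, exp (-|((I - 1 - j : ℕ) : ℝ) - I|)
        ≤ ∑ j ∈ Finset.range I, exp (-1) ^ j := by
          refine Finset.sum_le_sum fun j hj => ?_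
          rw [Finset.mem_range] at hj
          rw [← exp_nat_mul, exp_le_exp, Nat.cast_sub (by omega), Nat.cast_sub (by omega)]
          rw [abs_of_nonpos (by push_cast; linarith)]
          push_cast
          linarith
      _ ≤ ∑' j, exp (-1) ^ j := Summable.sum_le_tsum _ (fun j _ => pow_nonneg hq0 j)
          (summable_geometric_of_lt_one hq0 hq1)
      _ = (1 - exp (-1))⁻¹ := tsum_geometric_of_lt_one hq0 hq1
  rw [div_eq_mul_inv, two_mul]
  linarith

theorem summable_mul_pow_of_le {b : ℕ → ℝ} (hb : ∀ k, 0 ≤ b k) {r ρ : ℝ} (hr : 0 ≤ r)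
    (hrρ : r ≤ ρ) (hρ : Summable fun k => b k * ρ ^ (2 * k)) :
    Summable (fun k => b k * r ^ (2 * k)) ∧ 0 ≤ ∑' k, b k * r ^ (2 * k) ∧
      ∑' k, b k * r ^ (2 * k) ≤ ∑' k, b k * ρ ^ (2 * k) := by
  have hle : ∀ k, b k * r ^ (2 * k) ≤ b k * ρ ^ (2 * k) := fun k =>
    mul_le_mul_of_nonneg_left (pow_le_pow_left₀ hr hrρ _) (hb k)
  have hnn : ∀ k, 0 ≤ b k * r ^ (2 * k) := fun k => mul_nonneg (hb k) (pow_nonneg hr _)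
  have hs := Summable.of_nonneg_of_le hnn hle hρ
  exact ⟨hs, tsum_nonneg hnn, hs.tsum_le_tsum hle hρ⟩

theorem HasSum.add_ite_mul_pow {b : ℕ → ℝ} {r S : ℝ}
    (hS : HasSum (fun k => b k * r ^ (2 * k)) S) (d : ℝ) :
    HasSum (fun k => (b k + if k = 0 then d else 0) * r ^ (2 * k)) (S + d) := by
  have hconst : HasSum (fun k : ℕ => (if k = 0 then d else 0) * r ^ (2 * k)) d := by
    convert hasSum_ite_eq 0 d using 1
    funext k
    split_ifs with hk <;> simp [hk]
  simpa only [add_mul] using hS.add hconst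

namespace LogConvexWeight

def conj (a : ℝ) (φ : ℝ → ℝ) (k : ℕ) : ℝ := sSup ((fun t => k * t - φ t) '' Ico a 0)

-- The height of `φ` above its tangent of slope `k`;
-- `exp (-conj a φ k + k * t) = exp (φ t - gap a φ k t)`.
def gap (a : ℝ) (φ : ℝ → ℝ) (k : ℕ) (t : ℝ) : ℝ := φ t + conj a φ k - k * t

variable {a : ℝ} {φ : ℝ → ℝ} {k l : ℕ} {t : ℝ}

theorem le_conj (hφm : MonotoneOn φ (Iio 0)) (ht : t ∈ Ico a 0) : k * t - φ t ≤ conj a φ k := by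
  refine le_csSup ⟨-φ a, ?_⟩ (mem_image_of_mem _ ht)
  rintro _ ⟨s, hs, rfl⟩
  have : φ a ≤ φ s := hφm (hs.1.trans_lt hs.2) hs.2 hs.1
  nlinarith [hs.2, (Nat.cast_nonneg k : (0 : ℝ) ≤ k)]

theorem gap_nonneg (hφm : MonotoneOn φ (Iio 0)) (ht : t ∈ Ico a 0) : 0 ≤ gap a φ k t := by
  have := le_conj (k := k) hφm ht
  unfold gap
  linarith

theorem exists_gap_lt (ha : a < 0) {ε : ℝ} (hε : 0 < ε) : ∃ t ∈ Ico a 0, gap a φ k t < ε := by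
  obtain ⟨_, ⟨t, ht, rfl⟩, hlt⟩ := exists_lt_of_lt_csSup
    ((nonempty_Ico.2 ha).image _) (sub_lt_self (conj a φ k) hε)
  exact ⟨t, ht, by unfold gap; linarith⟩

theorem gap_sub_gap (k l : ℕ) (t : ℝ) :
    gap a φ k t - gap a φ l t = conj a φ k - conj a φ l - (k - l) * t := by
  unfold gap
  ring

theorem convexOn_gap (hφc : ConvexOn ℝ (Iio 0) φ) : ConvexOn ℝ (Iio 0) (gap a φ k) := by
  have hgap : gap a φ k = φ + ⇑(LinearMap.mulLeft ℝ (-(k : ℝ))) + fun _ => conj a φ k := by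
    funext t
    simp only [gap, Pi.add_apply, LinearMap.mulLeft_apply]
    ring
  rw [hgap]
  exact (hφc.add ((LinearMap.mulLeft ℝ (-(k : ℝ))).convexOn (convex_Iio 0))).add_const _

theorem continuousOn_gap (hφc : ConvexOn ℝ (Iio 0) φ) : ContinuousOn (gap a φ k) (Iio 0) :=
  ((hφc.continuousOn isOpen_Iio).add continuousOn_const).sub (by fun_prop)

theorem gap_le_of_mem_Icc (hφc : ConvexOn ℝ (Iio 0) φ) {x y c : ℝ} (hy : y < 0)
    (hxc : gap a φ k x ≤ c) (hyc : gap a φ k y ≤ c) (ht : t ∈ Icc x y) : gap a φ k t ≤ c := by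
  have hx : x < 0 := ht.1.trans_lt (ht.2.trans_lt hy)
  exact ((convexOn_gap hφc).convex_le c).ordConnected.out ⟨hx, hxc⟩ ⟨hy, hyc⟩ ht |>.2

theorem exists_gt_gap_lt (hφc : ConvexOn ℝ (Iio 0) φ) {c : ℝ} (ht : t < 0)
    (hc : gap a φ k t < c) : ∃ u, t < u ∧ u < 0 ∧ gap a φ k u < c := by
  have hcont := ((continuousOn_gap (a := a) (k := k) hφc).continuousAt (Iio_mem_nhds ht)).tendsto
  have := ((hcont.mono_left nhdsWithin_le_nhds).eventually (gt_mem_nhds hc)).and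
    (Ioo_mem_nhdsGT ht)
  obtain ⟨u, hu, htu, hu0⟩ := this.exists
  exact ⟨u, htu, hu0, hu⟩

-- Round the right derivative up to an integer: on `[a, 0)` this costs at most `-a`.
theorem exists_gap_le_neg (hφc : ConvexOn ℝ (Iio 0) φ) (hφm : MonotoneOn φ (Iio 0))
    {θ : ℝ} (hθ : θ ∈ Ico a 0) : ∃ k : ℕ, gap a φ k θ ≤ -a := by
  have hθi : θ ∈ interior (Iio (0 : ℝ)) := by rw [interior_Iio]; exact hθ.2
  set m := derivWithin φ (Ioi θ) θ
  have hsupp : ∀ t < 0, φ θ + m * (t - θ) ≤ φ t := fun t ht =>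
    hφc.add_rightDeriv_mul_sub_le hθi ht
  have hm : 0 ≤ m := by
    have h1 := hsupp (θ - 1) (by linarith [hθ.2])
    have h2 := hφm (show θ - 1 < 0 by linarith [hθ.2]) hθ.2 (by linarith)
    linarith
  refine ⟨⌈m⌉₊, ?_⟩
  have hk1 : m ≤ ⌈m⌉₊ := Nat.le_ceil m
  have hk2 : (⌈m⌉₊ : ℝ) < m + 1 := Nat.ceil_lt_add_one hm
  suffices conj a φ ⌈m⌉₊ ≤ ⌈m⌉₊ * θ - φ θ - a by unfold gap; linarith
  refine csSup_le ((nonempty_Ico.2 (hθ.1.trans_lt hθ.2)).image _) ?_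
  rintro _ ⟨t, ht, rfl⟩
  have := hsupp t ht.2
  rcases le_total θ t with hθt | htθ
  · nlinarith [ht.2, hθ.1]
  · nlinarith [hθ.2, hθ.1]

-- `gap k - gap l` is affine and larger at `x` than at `y`, so it does not decrease from `x` to `z`;
-- on top of that, `gap l` rises from at most `-a` to at least `1 - a`.
theorem gap_add_one_le (hφm : MonotoneOn φ (Iio 0)) {x y z : ℝ} (hy : y ∈ Ico a 0)
    (hside : 0 ≤ (x - y) * (z - x)) (hky : gap a φ k y < 1) (hkx : 1 - a ≤ gap a φ k x)
    (hlx : gap a φ l x ≤ -a) (hlz : 1 - a ≤ gap a φ l z) : gap a φ k x + 1 ≤ gap a φ k z := by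
  have hly := gap_nonneg (k := l) hφm hy
  have hxy := gap_sub_gap (a := a) (φ := φ) k l x
  have hyy := gap_sub_gap (a := a) (φ := φ) k l y
  have hzz := gap_sub_gap (a := a) (φ := φ) k l z
  have hdxy : 0 < ((l : ℝ) - k) * (x - y) := by nlinarith
  have hdzx : 0 ≤ ((l : ℝ) - k) * (z - x) := by
    by_contra! h
    nlinarith [mul_nonneg (sq_nonneg ((l : ℝ) - k)) hside]
  nlinarith

theorem tendsto_gap_atTop (hφm : MonotoneOn φ (Iio 0)) (ht : t ∈ Ico a 0) :
    Tendsto (fun k : ℕ => gap a φ k t) atTop atTop := by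
  have hhalf : t / 2 ∈ Ico a 0 := ⟨by linarith [ht.1, ht.2], by linarith [ht.2]⟩
  refine tendsto_atTop_mono (fun k => ?_) (tendsto_atTop_add_const_left _ (φ t - φ (t / 2))
    (tendsto_natCast_atTop_atTop.atTop_mul_const (show 0 < -t / 2 by linarith [ht.2])))
  have := le_conj (k := k) hφm hhalf
  unfold gap
  linarith

theorem tendsto_gap_nhdsLT (hφt : Tendsto φ (𝓝[<] 0) atTop) :
    Tendsto (gap a φ k) (𝓝[<] 0) atTop := by
  refine tendsto_atTop_mono' _ ?_ (tendsto_atTop_add_const_right _ (conj a φ k) hφt)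
  filter_upwards [self_mem_nhdsWithin] with t (ht : t < 0)
  unfold gap
  nlinarith [(Nat.cast_nonneg k : (0 : ℝ) ≤ k)]

theorem finite_setOf_gap_le (hφm : MonotoneOn φ (Iio 0)) (ht : t ∈ Ico a 0) (c : ℝ) :
    {k : ℕ | gap a φ k t ≤ c}.Finite := by
  have := (tendsto_gap_atTop hφm ht).eventually_gt_atTop c
  rw [← Nat.cofinite_eq_atTop, eventually_cofinite] at this
  simpa only [not_lt] using this

theorem exists_forall_lt_gap (hφt : Tendsto φ (𝓝[<] 0) atTop) (k : ℕ) (c : ℝ) :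
    ∃ l < 0, ∀ t, l < t → t < 0 → c < gap a φ k t := by
  obtain ⟨l, hl, hsub⟩ := mem_nhdsLT_iff_exists_Ioo_subset.1
    ((tendsto_gap_nhdsLT (a := a) (k := k) hφt).eventually_gt_atTop c)
  exact ⟨l, hl, fun t hlt ht0 => hsub ⟨hlt, ht0⟩⟩

-- Among the tangents valid at `θ`, keep one that stays valid longest.
theorem exists_greedy_step (hφc : ConvexOn ℝ (Iio 0) φ) (hφm : MonotoneOn φ (Iio 0))
    (hφt : Tendsto φ (𝓝[<] 0) atTop) {θ : ℝ} (hθ : θ ∈ Ico a 0) :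
    ∃ θ' > θ, θ' < 0 ∧ ∃ k : ℕ, (∀ t, θ ≤ t → t < θ' → gap a φ k t ≤ 1 - a) ∧
      ∀ (l : ℕ) t, gap a φ l θ ≤ 1 - a → θ' < t → t < 0 → 1 - a < gap a φ l t := by
  set V : ℕ → Set ℝ := fun k => {t ∈ Ico a 0 | gap a φ k t ≤ 1 - a}
  have hVbdd : ∀ k, BddAbove (V k) := fun k => ⟨0, fun t ht => ht.1.2.le⟩
  have hVθ : ∀ k, gap a φ k θ ≤ 1 - a → θ ∈ V k := fun k hk => ⟨hθ, hk⟩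
  obtain ⟨k₀, hk₀⟩ := exists_gap_le_neg hφc hφm hθ
  obtain ⟨k, hk, hkmax⟩ := exists_max_image {k | gap a φ k θ ≤ 1 - a} (fun k => sSup (V k))
    (finite_setOf_gap_le hφm hθ _) ⟨k₀, show gap a φ k₀ θ ≤ 1 - a by linarith⟩
  refine ⟨sSup (V k), ?_, ?_, k, ?_, ?_⟩
  · obtain ⟨u, hθu, hu0, hu⟩ := exists_gt_gap_lt hφc hθ.2 (show gap a φ k₀ θ < 1 - a by linarith)
    calc θ < u := hθu
      _ ≤ sSup (V k₀) := le_csSup (hVbdd k₀) ⟨⟨hθ.1.trans hθu.le, hu0⟩, hu.le⟩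
      _ ≤ sSup (V k) := hkmax k₀ (show gap a φ k₀ θ ≤ 1 - a by linarith)
  · obtain ⟨l, hl, hgt⟩ := exists_forall_lt_gap (a := a) hφt k (1 - a)
    refine (csSup_le ⟨θ, hVθ k hk⟩ fun t ht => ?_).trans_lt hl
    by_contra! hlt
    exact (hgt t hlt ht.1.2).not_ge ht.2
  · intro t hθt ht
    obtain ⟨y, hy, hty⟩ := exists_lt_of_lt_csSup ⟨θ, hVθ k hk⟩ ht
    exact gap_le_of_mem_Icc hφc hy.1.2 hk hy.2 ⟨hθt, hty.le⟩
  · intro l t hl hlt ht0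
    by_contra! hle
    have hmem : t ∈ V l := ⟨⟨hθ.1.trans (le_csSup (hVbdd l) (hVθ l hl)) |>.trans
      ((hkmax l hl).trans hlt.le), ht0⟩, hle⟩
    exact (le_csSup (hVbdd l) hmem).not_gt ((hkmax l hl).trans_lt hlt)

/-- The threshold `1 - a` exceeds the bound `-a` of `exists_gap_le_neg` by `1`, which is what the
gap of a distant tangent gains per interval (`gap_add_one_le`). -/
structure GreedyCover (a : ℝ) (φ : ℝ → ℝ) (θ : ℕ → ℝ) (κ : ℕ → ℕ) : Prop where
  zero : θ 0 = a
  lt_succ : ∀ n, θ n < θ (n + 1)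
  lt_zero : ∀ n, θ n < 0
  gap_le : ∀ n t, θ n ≤ t → t < θ (n + 1) → gap a φ (κ n) t ≤ 1 - a
  lt_gap : ∀ n (l : ℕ) t, gap a φ l (θ n) ≤ 1 - a → θ (n + 1) < t → t < 0 → 1 - a < gap a φ l t

theorem exists_greedyCover (hφc : ConvexOn ℝ (Iio 0) φ) (hφm : MonotoneOn φ (Iio 0))
    (hφt : Tendsto φ (𝓝[<] 0) atTop) (ha : a < 0) : ∃ θ κ, GreedyCover a φ θ κ := by
  choose! next hnext hnext0 κ hvalid hexp using
    fun θ (hθ : θ ∈ Ico a 0) => exists_greedy_step hφc hφm hφt hθ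
  have hmem : ∀ n, next^[n] a ∈ Ico a 0 := by
    intro n
    induction n with
    | zero => exact ⟨le_rfl, ha⟩
    | succ n ih =>
      rw [Function.iterate_succ_apply']
      exact ⟨ih.1.trans (hnext _ ih).le, hnext0 _ ih⟩
  refine ⟨fun n => next^[n] a, fun n => κ (next^[n] a), ⟨rfl, fun n => ?_, fun n => (hmem n).2,
    fun n t => ?_, fun n l t => ?_⟩⟩ <;> simp only [Function.iterate_succ_apply']
  · exact hnext _ (hmem n)
  · exact hvalid _ (hmem n) t
  · exact hexp _ (hmem n) l t

namespace GreedyCover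

variable {θ : ℕ → ℝ} {κ : ℕ → ℕ} {n m : ℕ}

theorem neg (hθ : GreedyCover a φ θ κ) : a < 0 := hθ.zero ▸ hθ.lt_zero 0

theorem strictMono (hθ : GreedyCover a φ θ κ) : StrictMono θ :=
  strictMono_nat_of_lt_succ hθ.lt_succ

theorem mem (hθ : GreedyCover a φ θ κ) (n : ℕ) : θ n ∈ Ico a 0 :=
  ⟨hθ.zero ▸ hθ.strictMono.monotone (Nat.zero_le n), hθ.lt_zero n⟩

theorem lt_gap_of_succ_lt (hθ : GreedyCover a φ θ κ) (ht : θ (n + 1) < t) (ht0 : t < 0) :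
    1 - a < gap a φ (κ n) t :=
  hθ.lt_gap n _ t (hθ.gap_le n _ le_rfl (hθ.lt_succ n)) ht ht0

theorem le_gap_of_succ_le (hθ : GreedyCover a φ θ κ) (hφc : ConvexOn ℝ (Iio 0) φ)
    (hl : gap a φ l (θ n) ≤ 1 - a) (ht : θ (n + 1) ≤ t) (ht0 : t < 0) : 1 - a ≤ gap a φ l t := by
  by_contra! hlt
  obtain ⟨u, htu, hu0, hu⟩ := exists_gt_gap_lt hφc ht0 hlt
  exact (hθ.lt_gap n l u hl (ht.trans_lt htu) hu0).not_gt hu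

theorem exists_gap_le (hθ : GreedyCover a φ θ κ) (n : ℕ) :
    ∃ u, θ n < u ∧ u < θ (n + 1) ∧ gap a φ (κ n) u ≤ 1 - a := by
  obtain ⟨u, hnu, hun⟩ := exists_between (hθ.lt_succ n)
  exact ⟨u, hnu, hun, hθ.gap_le n u hnu.le hun⟩

-- Otherwise `κ (n + 1)` would be valid at `θ n`, hence would have expired after `θ (n + 1)`.
theorem lt_gap_of_le (hθ : GreedyCover a φ θ κ) (hφc : ConvexOn ℝ (Iio 0) φ) (ht : t ≤ θ n) :
    1 - a < gap a φ (κ (n + 1)) t := by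
  by_contra! hle
  have hn : gap a φ (κ (n + 1)) (θ n) ≤ 1 - a :=
    gap_le_of_mem_Icc hφc (hθ.lt_zero _) hle (hθ.gap_le _ _ le_rfl (hθ.lt_succ _))
      ⟨ht, (hθ.lt_succ n).le⟩
  obtain ⟨u, hu, hu', hgap⟩ := hθ.exists_gap_le (n + 1)
  exact (hθ.lt_gap n _ u hn hu (hu'.trans (hθ.lt_zero _))).not_ge hgap

theorem injective (hθ : GreedyCover a φ θ κ) : Function.Injective κ := by
  refine Function.Injective.of_lt_imp_ne fun i j hij hκ => ?_
  obtain ⟨u, hu, hu', hgap⟩ := hθ.exists_gap_le j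
  rw [← hκ] at hgap
  exact (hθ.lt_gap_of_succ_lt ((hθ.strictMono.monotone hij).trans_lt hu)
    (hu'.trans (hθ.lt_zero _))).not_ge hgap

theorem le_gap_past (hθ : GreedyCover a φ θ κ) (hφc : ConvexOn ℝ (Iio 0) φ)
    (hφm : MonotoneOn φ (Iio 0)) {i : ℕ} (him : i + 2 ≤ m) (ht : θ m ≤ t) (ht0 : t < 0) :
    1 - a + ((m : ℝ) - i - 2) ≤ gap a φ (κ i) t := by
  induction m, him using Nat.le_induction generalizing t with
  | base =>
    have := hθ.lt_gap_of_succ_lt ((hθ.lt_succ (i + 1)).trans_le ht) ht0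
    push_cast
    linarith
  | succ m him ih =>
    obtain ⟨l, hl⟩ := exists_gap_le_neg hφc hφm (hθ.mem m)
    obtain ⟨y, hy, hky⟩ := exists_gap_lt (k := κ i) hθ.neg one_pos
    have hexp : 1 - a < gap a φ (κ i) (θ m) :=
      hθ.lt_gap_of_succ_lt (hθ.strictMono (by omega)) (hθ.lt_zero m)
    have hym : y < θ m := by
      by_contra! hmy
      exact hexp.not_ge (gap_le_of_mem_Icc hφc hy.2 (hθ.gap_le i _ le_rfl (hθ.lt_succ i))
        (by linarith [hθ.neg]) ⟨hθ.strictMono.monotone (by omega), hmy⟩)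
    have hmt : θ m ≤ t := (hθ.lt_succ m).le.trans ht
    have hgrow := gap_add_one_le hφm hy (by nlinarith) hky hexp.le hl
      (hθ.le_gap_of_succ_le hφc (by linarith [hθ.neg]) ht ht0)
    have := ih le_rfl (hθ.lt_zero m)
    push_cast
    linarith


theorem le_gap_future (hθ : GreedyCover a φ θ κ) (hφc : ConvexOn ℝ (Iio 0) φ)
    (hφm : MonotoneOn φ (Iio 0)) (d : ℕ) (ht : t ≤ θ m) :
    1 - a + d ≤ gap a φ (κ (m + 1 + d)) t := by
  induction d generalizing m t with
  | zero => simpa using (hθ.lt_gap_of_le hφc ht).le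
  | succ d ih =>
    rw [show m + 1 + (d + 1) = m + 1 + d + 1 by omega]
    obtain ⟨l, hl⟩ := exists_gap_le_neg hφc hφm (hθ.mem (m + 1))
    have hlt : 1 - a ≤ gap a φ l t := by
      by_contra! hlt
      have hlm : gap a φ l (θ m) ≤ 1 - a := gap_le_of_mem_Icc hφc (hθ.lt_zero (m + 1)) hlt.le
        (by linarith [hθ.neg]) ⟨ht, (hθ.lt_succ m).le⟩
      linarith [hθ.le_gap_of_succ_le hφc hlm le_rfl (hθ.lt_zero _), hθ.neg]
    obtain ⟨y, hy, hky⟩ := exists_gap_lt (k := κ (m + 1 + d + 1)) hθ.neg one_pos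
    have hnot : 1 - a < gap a φ (κ (m + 1 + d + 1)) (θ (m + 1)) :=
      hθ.lt_gap_of_le hφc (hθ.strictMono.monotone (by omega))
    have hmy : θ (m + 1) < y := by
      by_contra! hym
      exact hnot.not_ge (gap_le_of_mem_Icc hφc (hθ.lt_zero _) (by linarith [hθ.neg])
        (hθ.gap_le _ _ le_rfl (hθ.lt_succ _)) ⟨hym, hθ.strictMono.monotone (by omega)⟩)
    have hmt : t ≤ θ (m + 1) := ht.trans (hθ.lt_succ m).le
    have := ih (m := m + 1) le_rfl
    rw [show m + 1 + 1 + d = m + 1 + d + 1 by omega] at this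
    have hgrow := gap_add_one_le hφm hy (by nlinarith) hky (by linarith [d.cast_nonneg (α := ℝ)])
      hl hlt
    push_cast
    linarith

theorem exists_lt (hθ : GreedyCover a φ θ κ) (hφc : ConvexOn ℝ (Iio 0) φ)
    (hφm : MonotoneOn φ (Iio 0)) (ht : t < 0) : ∃ n, t < θ n := by
  by_contra! hle
  have hbdd : BddAbove (range θ) := ⟨t, forall_mem_range.2 hle⟩
  set T := ⨆ n, θ n
  have hT : T ∈ Ico a 0 := ⟨(hθ.mem 0).1.trans (le_ciSup hbdd 0), (ciSup_le hle).trans_lt ht⟩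
  obtain ⟨l, hl⟩ := exists_gap_le_neg hφc hφm hT
  have hlT : gap a φ l T < 1 - a := by linarith
  obtain ⟨u, hTu, hu0, hu⟩ := exists_gt_gap_lt hφc hT.2 hlT
  have hcont := ((continuousOn_gap (a := a) (k := l) hφc).continuousAt (Iio_mem_nhds hT.2)).tendsto
  obtain ⟨n, hn⟩ := ((hcont.comp (tendsto_atTop_ciSup hθ.strictMono.monotone hbdd)).eventually
    (gt_mem_nhds hlT)).exists
  exact (hθ.lt_gap n l u hn.le ((le_ciSup hbdd _).trans_lt hTu) hu0).not_gt hu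

theorem exists_mem_Ico (hθ : GreedyCover a φ θ κ) (hφc : ConvexOn ℝ (Iio 0) φ)
    (hφm : MonotoneOn φ (Iio 0)) (ht : t ∈ Ico a 0) : ∃ I, θ I ≤ t ∧ t < θ (I + 1) := by
  classical
  have hex := hθ.exists_lt hφc hφm ht.2
  have hpos : Nat.find hex ≠ 0 := by
    intro h
    have := Nat.find_spec hex
    rw [h, hθ.zero] at this
    exact this.not_ge ht.1
  obtain ⟨I, hI⟩ := Nat.exists_eq_add_one_of_ne_zero hpos
  refine ⟨I, ?_, hI ▸ Nat.find_spec hex⟩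
  simpa using Nat.find_min hex (show I < Nat.find hex by omega)

theorem abs_sub_sub_one_le_gap (hθ : GreedyCover a φ θ κ) (hφc : ConvexOn ℝ (Iio 0) φ)
    (hφm : MonotoneOn φ (Iio 0)) {I : ℕ} (ht : θ I ≤ t) (ht' : t < θ (I + 1)) (i : ℕ) :
    |(i : ℝ) - I| - 1 ≤ gap a φ (κ i) t := by
  have ht0 : t < 0 := ht'.trans (hθ.lt_zero _)
  have hnonneg := gap_nonneg (k := κ i) hφm ⟨(hθ.mem I).1.trans ht, ht0⟩
  have ha := hθ.neg
  have hpast : (I : ℝ) - i - 1 ≤ gap a φ (κ i) t := by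
    rcases le_or_gt (i + 2) I with hiI | hiI
    · linarith [hθ.le_gap_past hφc hφm hiI ht ht0]
    · have : (I : ℝ) ≤ i + 1 := by exact_mod_cast (by omega : I ≤ i + 1)
      linarith
  have hfuture : (i : ℝ) - I - 1 ≤ gap a φ (κ i) t := by
    rcases le_or_gt (I + 2) i with hIi | hIi
    · obtain ⟨d, rfl⟩ := Nat.exists_eq_add_of_le hIi
      have := hθ.le_gap_future hφc hφm d ht'.le
      rw [show I + 1 + 1 + d = I + 2 + d by omega] at this
      push_cast
      linarith
    · have : (i : ℝ) ≤ I + 1 := by exact_mod_cast (by omega : i ≤ I + 1)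
      linarith
  rw [sub_le_iff_le_add, abs_le]
  constructor <;> linarith

theorem tsum_exp_neg_gap (hθ : GreedyCover a φ θ κ) (hφc : ConvexOn ℝ (Iio 0) φ)
    (hφm : MonotoneOn φ (Iio 0)) (ht : t ∈ Ico a 0) :
    Summable (fun i => exp (-gap a φ (κ i) t)) ∧ exp (a - 1) ≤ ∑' i, exp (-gap a φ (κ i) t) ∧
      ∑' i, exp (-gap a φ (κ i) t) ≤ 2 * exp 1 / (1 - exp (-1)) := by
  obtain ⟨I, hI, hI'⟩ := hθ.exists_mem_Ico hφc hφm ht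
  have hle : ∀ i, exp (-gap a φ (κ i) t) ≤ exp 1 * exp (-|(i : ℝ) - I|) := by
    intro i
    rw [← exp_add]
    exact exp_le_exp.2 (by linarith [hθ.abs_sub_sub_one_le_gap hφc hφm hI hI' i])
  have hs : Summable (fun i => exp (-gap a φ (κ i) t)) :=
    .of_nonneg_of_le (fun _ => (exp_pos _).le) hle ((summable_exp_neg_abs_sub I).mul_left _)
  refine ⟨hs, ?_, ?_⟩
  · calc exp (a - 1) ≤ exp (-gap a φ (κ I) t) := exp_le_exp.2 (by linarith [hθ.gap_le I t hI hI'])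
      _ ≤ _ := hs.le_tsum I fun _ _ => (exp_pos _).le
  · calc ∑' i, exp (-gap a φ (κ i) t) ≤ ∑' i : ℕ, exp 1 * exp (-|(i : ℝ) - I|) :=
          hs.tsum_le_tsum hle ((summable_exp_neg_abs_sub I).mul_left _)
      _ = exp 1 * ∑' i : ℕ, exp (-|(i : ℝ) - I|) := tsum_mul_left
      _ ≤ exp 1 * (2 / (1 - exp (-1))) := by gcongr; exact tsum_exp_neg_abs_sub_le I
      _ = 2 * exp 1 / (1 - exp (-1)) := by ring

end GreedyCover

theorem exists_tsum_mul_exp_equiv (hφc : ConvexOn ℝ (Iio 0) φ) (hφm : MonotoneOn φ (Iio 0))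
    (hφt : Tendsto φ (𝓝[<] 0) atTop) (ha : a < 0) :
    ∃ b : ℕ → ℝ, (∀ k, 0 ≤ b k) ∧ ∀ t ∈ Ico a 0, Summable (fun k => b k * exp (k * t)) ∧
      exp (a - 1) * exp (φ t) ≤ ∑' k, b k * exp (k * t) ∧
      ∑' k, b k * exp (k * t) ≤ 2 * exp 1 / (1 - exp (-1)) * exp (φ t) := by
  obtain ⟨θ, κ, hθ⟩ := exists_greedyCover hφc hφm hφt ha
  refine ⟨(range κ).indicator fun k => exp (-conj a φ k),
    fun k => indicator_nonneg (fun _ _ => (exp_pos _).le) k, fun t ht => ?_⟩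
  set f := fun k : ℕ => (range κ).indicator (fun k => exp (-conj a φ k)) k * exp (k * t)
  have hf0 : ∀ k ∉ range κ, f k = 0 := fun k hk => by simp [f, indicator_of_notMem hk]
  have hfκ : ∀ i, f (κ i) = exp (φ t) * exp (-gap a φ (κ i) t) := by
    intro i
    simp only [f, indicator_of_mem (mem_range_self i), ← exp_add]
    unfold gap
    ring_nf
  obtain ⟨hs, hlow, hup⟩ := hθ.tsum_exp_neg_gap hφc hφm ht
  have hsum : Summable f := (hθ.injective.summable_iff hf0).1 <| by
    simpa only [Function.comp_def, hfκ] using hs.mul_left (exp (φ t))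
  have htsum : ∑' k, f k = exp (φ t) * ∑' i, exp (-gap a φ (κ i) t) := by
    rw [← hθ.injective.tsum_eq (Function.support_subset_iff'.2 hf0), ← tsum_mul_left]
    simp only [hfκ]
  refine ⟨hsum, ?_, ?_⟩ <;> rw [htsum]
  · nlinarith [exp_pos (φ t)]
  · nlinarith [exp_pos (φ t)]

-- `profile w (2 * log r) = 2 * log (w r)`, so slope `k` in `t` is the monomial `r ^ (2 * k)`.
def profile (w : ℝ → ℝ) (t : ℝ) : ℝ := 2 * log (w (exp (t / 2)))

variable {w : ℝ → ℝ}

theorem exp_half_mem_Ico {t : ℝ} (ht : t < 0) : exp (t / 2) ∈ Ico (0 : ℝ) 1 :=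
  ⟨(exp_pos _).le, exp_lt_one_iff.2 (by linarith)⟩

theorem convexOn_profile (hlc : IsLogConvex w) : ConvexOn ℝ (Iio 0) (profile w) := by
  have hpre : LinearMap.mulLeft ℝ (1 / 2 : ℝ) ⁻¹' Iio 0 = Iio 0 := by
    ext t
    simp only [mem_preimage, LinearMap.mulLeft_apply, mem_Iio]
    constructor <;> intro h <;> linarith
  have h := (hlc.comp_linearMap (LinearMap.mulLeft ℝ (1 / 2 : ℝ))).smul (zero_le_two (α := ℝ))
  rw [hpre] at h
  have heq : profile w =
      (2 : ℝ) • ((fun t => log (w (exp t))) ∘ LinearMap.mulLeft ℝ (1 / 2 : ℝ)) := by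
    funext t
    simp only [profile, Pi.smul_apply, Function.comp_apply, LinearMap.mulLeft_apply, smul_eq_mul]
    ring_nf
  rwa [heq]

theorem monotoneOn_profile (hw : IsWeight w) : MonotoneOn (profile w) (Iio 0) := by
  intro s hs t ht hst
  have hws := hw.2.2.1 _ (exp_half_mem_Ico hs)
  have := hw.2.1 (exp_half_mem_Ico hs) (exp_half_mem_Ico ht) (exp_le_exp.2 (by linarith))
  unfold profile
  gcongr

theorem tendsto_profile (hw : IsWeight w) : Tendsto (profile w) (𝓝[<] 0) atTop := by
  refine tendsto_atTop.2 fun M => ?_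
  obtain ⟨r, hr, hMr⟩ := hw.2.2.2 (exp (M / 2))
  have hexp : Tendsto (fun t : ℝ => exp (t / 2)) (𝓝[<] 0) (𝓝 1) := by
    exact ((by fun_prop : Continuous fun t : ℝ => exp (t / 2)).tendsto' 0 1 (by simp)).mono_left
      nhdsWithin_le_nhds
  filter_upwards [hexp.eventually_const_lt hr.2, self_mem_nhdsWithin] with t hrt (ht : t < 0)
  have hwr : w r ≤ w (exp (t / 2)) := hw.2.1 hr (exp_half_mem_Ico ht) hrt.le
  have := (lt_log_iff_exp_lt (hw.2.2.1 _ (exp_half_mem_Ico ht))).2 (hMr.trans_le hwr)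
  unfold profile
  linarith

theorem exists_sq_series_equiv_of_half_le (hw : IsWeight w) (hlc : IsLogConvex w) :
    ∃ b : ℕ → ℝ, (∀ k, 0 ≤ b k) ∧ ∃ c C : ℝ, 0 < c ∧ c ≤ 1 ∧ 0 < C ∧
      ∀ r ∈ Ico (1 / 2 : ℝ) 1, Summable (fun k => b k * r ^ (2 * k)) ∧
        c * w r ^ 2 ≤ ∑' k, b k * r ^ (2 * k) ∧ ∑' k, b k * r ^ (2 * k) ≤ C * w r ^ 2 := by
  have ha : 2 * log (1 / 2) < 0 := by
    linarith [log_neg (one_half_pos (α := ℝ)) one_half_lt_one]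
  obtain ⟨b, hb0, hb⟩ := exists_tsum_mul_exp_equiv (convexOn_profile hlc) (monotoneOn_profile hw)
    (tendsto_profile hw) ha
  refine ⟨b, hb0, exp (2 * log (1 / 2) - 1), 2 * exp 1 / (1 - exp (-1)), exp_pos _,
    exp_le_one_iff.2 (by linarith), div_pos (mul_pos two_pos (exp_pos 1))
      (sub_pos.2 (exp_lt_one_iff.2 neg_one_lt_zero)), fun r hr => ?_⟩
  have hr0 : 0 < r := one_half_pos.trans_le hr.1
  have hmono : ∀ k : ℕ, exp (k * (2 * log r)) = r ^ (2 * k) := fun k => by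
    rw [show (k : ℝ) * (2 * log r) = ((2 * k : ℕ) : ℝ) * log r by push_cast; ring, exp_nat_mul,
      exp_log hr0]
  have hw2 : exp (profile w (2 * log r)) = w r ^ 2 := by
    rw [profile, show 2 * log r / 2 = log r by ring, exp_log hr0,
      show (2 : ℝ) * log (w r) = ((2 : ℕ) : ℝ) * log (w r) by norm_num, exp_nat_mul,
      exp_log (hw.2.2.1 r ⟨hr0.le, hr.2⟩)]
  have ht : 2 * log r ∈ Ico (2 * log (1 / 2)) 0 :=
    ⟨by gcongr; exact hr.1, by linarith [log_neg hr0 hr.2]⟩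
  simpa only [hmono, hw2] using hb _ ht

-- Below `1 / 2` the constant term `w (1 / 2) ^ 2` takes over.
theorem exists_sq_series_equiv (hw : IsWeight w) (hlc : IsLogConvex w) :
    ∃ B : ℕ → ℝ, (∀ k, 0 ≤ B k) ∧ ∃ c₁ c₂ : ℝ, 0 < c₁ ∧ 0 < c₂ ∧
      ∀ r ∈ Ico (0 : ℝ) 1, Summable (fun k => B k * r ^ (2 * k)) ∧
        c₁ * w r ^ 2 ≤ ∑' k, B k * r ^ (2 * k) ∧ ∑' k, B k * r ^ (2 * k) ≤ c₂ * w r ^ 2 := by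
  obtain ⟨b, hb0, c, C, hc, hc1, hC, hb⟩ := exists_sq_series_equiv_of_half_le hw hlc
  have hhalf : (1 / 2 : ℝ) ∈ Ico (1 / 2 : ℝ) 1 := ⟨le_rfl, one_half_lt_one⟩
  have hw0 := hw.2.2.1 0 ⟨le_rfl, one_pos⟩
  have hmem : (1 / 2 : ℝ) ∈ Ico (0 : ℝ) 1 := ⟨one_half_pos.le, one_half_lt_one⟩
  have hwh := hw.2.2.1 _ hmem
  set d := w (1 / 2) ^ 2 with hd
  set ρ := (w (1 / 2) / w 0) ^ 2 with hρ
  refine ⟨fun k => b k + if k = 0 then d else 0,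
    fun k => add_nonneg (hb0 k) (by split_ifs <;> positivity), c, (C + 1) * ρ, hc,
    mul_pos (by linarith) (pow_pos (div_pos hwh hw0) 2), fun r hr => ?_⟩
  have hwr := hw.2.2.1 r hr
  have hw0r : w 0 ≤ w r := hw.2.1 ⟨le_rfl, one_pos⟩ hr hr.1
  have hdρ : d ≤ ρ * w r ^ 2 := by
    calc d = ρ * w 0 ^ 2 := by rw [hd, hρ, div_pow, div_mul_cancel₀ _ (pow_ne_zero 2 hw0.ne')]
      _ ≤ ρ * w r ^ 2 := by gcongr
  obtain ⟨hs, hlow, hup⟩ : Summable (fun k => b k * r ^ (2 * k)) ∧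
      c * w r ^ 2 ≤ ∑' k, b k * r ^ (2 * k) + d ∧
      ∑' k, b k * r ^ (2 * k) + d ≤ (C + 1) * ρ * w r ^ 2 := by
    rcases lt_or_ge r (1 / 2) with hr2 | hr2
    · obtain ⟨hs, hS0, hSle⟩ := summable_mul_pow_of_le hb0 hr.1 hr2.le (hb _ hhalf).1
      have hS := hSle.trans (hb _ hhalf).2.2
      have hwd : w r ^ 2 ≤ d := pow_le_pow_left₀ hwr.le (hw.2.1 hr hmem hr2.le) 2
      refine ⟨hs, ?_, ?_⟩ <;> nlinarith
    · obtain ⟨hs, hl, hu⟩ := hb r ⟨hr2, hr.2⟩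
      have hdw : d ≤ w r ^ 2 := pow_le_pow_left₀ hwh.le (hw.2.1 hmem hr hr2) 2
      have hρ1 : 1 ≤ ρ := by
        rw [one_le_sq_iff_one_le_abs, abs_of_pos (div_pos hwh hw0), one_le_div hw0]
        exact hw.2.1 ⟨le_rfl, one_pos⟩ hmem one_half_pos.le
      refine ⟨hs, ?_, ?_⟩ <;> nlinarith [sq_nonneg (w r), sq_nonneg (w (1 / 2))]
  have hB := hs.hasSum.add_ite_mul_pow d
  exact ⟨hB.summable, hB.tsum_eq ▸ hlow, hB.tsum_eq ▸ hup⟩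

end LogConvexWeight

theorem stmt4 (w : ℝ → ℝ) (hw : IsWeight w) (hlc : IsLogConvex w) :
    ∃ a : ℕ → ℝ, ∃ c₁ c₂ : ℝ, 0 < c₁ ∧ 0 < c₂ ∧
      (∀ r ∈ Set.Ico (0:ℝ) 1, Summable (fun k => (a k)^2 * r^(2*k)) ∧
        c₁ * (w r)^2 ≤ ∑' k, (a k)^2 * r^(2*k) ∧
        (∑' k, (a k)^2 * r^(2*k)) ≤ c₂ * (w r)^2) ∧
      ∀ ρ ∈ Set.Ico (0:ℝ) 1,
        TendstoUniformlyOn (fun N r => ∑ k ∈ Finset.range N, (a k)^2 * r^(2*k))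
          (fun r => ∑' k, (a k)^2 * r^(2*k)) Filter.atTop (Set.Icc 0 ρ) := by
  obtain ⟨B, hB0, c₁, c₂, hc₁, hc₂, hB⟩ := LogConvexWeight.exists_sq_series_equiv hw hlc
  have hsq : ∀ k, sqrt (B k) ^ 2 = B k := fun k => sq_sqrt (hB0 k)
  refine ⟨fun k => sqrt (B k), c₁, c₂, hc₁, hc₂, ?_, fun ρ hρ => ?_⟩ <;> simp only [hsq]
  · exact hB
  · refine tendstoUniformlyOn_tsum_nat (hB ρ hρ).1 fun k r hr => ?_
    rw [norm_of_nonneg (mul_nonneg (hB0 k) (pow_nonneg hr.1 _))]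
    exact mul_le_mul_of_nonneg_left (pow_le_pow_left₀ hr.1 hr.2 _) (hB0 k)
end
end

section
/- Every doubling weight function w on [0,1) is equivalent to a log-convex weight function. -/
open MeasureTheory Set Metric

noncomputable section

/-!
Put `φ t = log (w (exp t))` for `t < 0` and let `ψ` be its greatest convex minorant, the supremum
of the affine functions below `φ`. Then `ψ ≤ φ`, `ψ` is convex and nondecreasing, and
`v = exp ∘ ψ ∘ log` is a log-convex weight with `v ≤ w`. For the reverse bound let
`K = log A / log 2`: iterating the doubling condition shows that `σ ↦ w (1 - σ) σ ^ K` is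
increasing up to the factor `A`. As `log (1 - exp t)` is concave, its tangent at `t` then yields
an affine minorant of `φ` within `log A + K` of `φ t`, so `φ ≤ ψ + log A + K`.
-/

open Real Filter

section ConvexMinorant

variable {s : Set ℝ} {f : ℝ → ℝ}

def affineMinorants (s : Set ℝ) (f : ℝ → ℝ) : Set (ℝ × ℝ) :=
  {p | ∀ u ∈ s, p.1 * u + p.2 ≤ f u}

def convexMinorant (s : Set ℝ) (f : ℝ → ℝ) (t : ℝ) : ℝ :=
  sSup ((fun p : ℝ × ℝ => p.1 * t + p.2) '' affineMinorants s f)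

lemma bddAbove_affineMinorants_image {t : ℝ} (ht : t ∈ s) :
    BddAbove ((fun p : ℝ × ℝ => p.1 * t + p.2) '' affineMinorants s f) :=
  ⟨f t, forall_mem_image.2 fun _ hp => hp t ht⟩

lemma le_convexMinorant {p : ℝ × ℝ} (hp : p ∈ affineMinorants s f) {t : ℝ} (ht : t ∈ s) :
    p.1 * t + p.2 ≤ convexMinorant s f t :=
  le_csSup (bddAbove_affineMinorants_image ht) (mem_image_of_mem _ hp)

lemma convexMinorant_le (hne : (affineMinorants s f).Nonempty) {t : ℝ} (ht : t ∈ s) :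
    convexMinorant s f t ≤ f t :=
  csSup_le (hne.image _) (forall_mem_image.2 fun _ hp => hp t ht)

lemma convexOn_convexMinorant (hs : Convex ℝ s) (hne : (affineMinorants s f).Nonempty) :
    ConvexOn ℝ s (convexMinorant s f) := by
  refine ⟨hs, fun x hx y hy a b ha hb hab => csSup_le (hne.image _) ?_⟩
  rintro _ ⟨p, hp, rfl⟩
  calc p.1 * (a • x + b • y) + p.2 = a * (p.1 * x + p.2) + b * (p.1 * y + p.2) := by
        simp only [smul_eq_mul]; linear_combination (-p.2) * hab
    _ ≤ a * convexMinorant s f x + b * convexMinorant s f y := by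
        gcongr
        exacts [le_convexMinorant hp hx, le_convexMinorant hp hy]

lemma nonneg_of_mem_affineMinorants_Iio {c : ℝ} (hf : MonotoneOn f (Iio c)) {p : ℝ × ℝ}
    (hp : p ∈ affineMinorants (Iio c) f) : 0 ≤ p.1 := by
  by_contra! hneg
  have hc : c - 1 ∈ Iio c := by simp
  have hline : Tendsto (fun u => p.1 * u + p.2) atBot atTop :=
    tendsto_atTop_add_const_right _ _ ((tendsto_const_mul_atTop_of_neg hneg).2 tendsto_id)
  obtain ⟨u, hu, hlarge⟩ :=
    ((eventually_le_atBot (c - 1)).and (hline.eventually_gt_atTop (f (c - 1)))).exists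
  have hu' : u ∈ Iio c := lt_of_le_of_lt hu hc
  linarith [hp u hu', hf hu' hc hu]

lemma monotoneOn_convexMinorant {c : ℝ} (hf : MonotoneOn f (Iio c))
    (hne : (affineMinorants (Iio c) f).Nonempty) :
    MonotoneOn (convexMinorant (Iio c) f) (Iio c) := by
  intro x _ y hy hxy
  refine csSup_le (hne.image _) (forall_mem_image.2 fun p hp => ?_)
  calc p.1 * x + p.2 ≤ p.1 * y + p.2 := by
        gcongr; exact nonneg_of_mem_affineMinorants_Iio hf hp
    _ ≤ convexMinorant (Iio c) f y := le_convexMinorant hp hy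

end ConvexMinorant

lemma log_one_sub_exp_le {t u : ℝ} (ht : t < 0) (hu : u < 0) :
    log (1 - exp u) ≤ log (1 - exp t) + (t - u) * (exp t / (1 - exp t)) := by
  have het : 0 < 1 - exp t := by linarith [exp_lt_one_iff.2 ht]
  have heu : 0 < 1 - exp u := by linarith [exp_lt_one_iff.2 hu]
  have htangent : exp t - exp u ≤ (t - u) * exp t := by
    have := add_one_le_exp (u - t)
    rw [exp_sub] at this
    have := (le_div_iff₀ (exp_pos t)).1 this
    nlinarith
  calc log (1 - exp u) = log (1 - exp t) + log ((1 - exp u) / (1 - exp t)) := by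
        rw [log_div heu.ne' het.ne']; ring
    _ ≤ log (1 - exp t) + ((1 - exp u) / (1 - exp t) - 1) := by
        gcongr; exact log_le_sub_one_of_pos (by positivity)
    _ = log (1 - exp t) + (exp t - exp u) / (1 - exp t) := by field_simp; ring
    _ ≤ log (1 - exp t) + (t - u) * (exp t / (1 - exp t)) := by
        rw [← mul_div_assoc]; gcongr

def logProfile (w : ℝ → ℝ) (t : ℝ) : ℝ := log (w (exp t))

section Doubling

variable {w : ℝ → ℝ} {A : ℝ}

lemma doubling_iterate (hA : 0 ≤ A)
    (hdoub : ∀ s : ℝ, 0 < s → s ≤ 1 → w (1 - s / 2) ≤ A * w (1 - s))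
    {s : ℝ} (hs : 0 < s) (hs1 : s ≤ 1) (k : ℕ) : w (1 - s / 2 ^ k) ≤ A ^ k * w (1 - s) := by
  induction k with
  | zero => simp
  | succ k ih =>
    have hsk1 : s / 2 ^ k ≤ 1 := (div_le_self hs.le (one_le_pow₀ one_le_two)).trans hs1
    calc w (1 - s / 2 ^ (k + 1)) = w (1 - s / 2 ^ k / 2) := by rw [pow_succ, div_div]
      _ ≤ A * w (1 - s / 2 ^ k) := hdoub _ (by positivity) hsk1
      _ ≤ A * (A ^ k * w (1 - s)) := by gcongr
      _ = A ^ (k + 1) * w (1 - s) := by ring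

lemma log_le_of_doubling (hmono : MonotoneOn w (Ico 0 1))
    (hpos : ∀ r ∈ Ico (0:ℝ) 1, 0 < w r) (hA : 1 ≤ A)
    (hdoub : ∀ s : ℝ, 0 < s → s ≤ 1 → w (1 - s / 2) ≤ A * w (1 - s))
    {σ s : ℝ} (hσ : 0 < σ) (hσs : σ ≤ s) (hs1 : s ≤ 1) :
    log (w (1 - σ)) ≤ log (w (1 - s)) + log A * (1 + log (s / σ) / log 2) := by
  have hs : 0 < s := hσ.trans_le hσs
  obtain ⟨n, h2n, hn⟩ := exists_nat_pow_near ((one_le_div hσ).2 hσs) one_lt_two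
  have hwσ : w (1 - σ) ≤ w (1 - s / 2 ^ (n + 1)) := by
    have : s / 2 ^ (n + 1) < σ := (div_lt_iff₀' (by positivity)).2 ((div_lt_iff₀ hσ).1 hn)
    have : 0 < s / 2 ^ (n + 1) := by positivity
    exact hmono ⟨by linarith, by linarith⟩ ⟨by linarith, by linarith⟩ (by linarith)
  have hn_le : (n : ℝ) ≤ log (s / σ) / log 2 := by
    rw [le_div_iff₀ (log_pos one_lt_two), ← log_pow]
    exact log_le_log (by positivity) h2n
  have hws : 0 < w (1 - s) := hpos _ ⟨by linarith, by linarith⟩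
  calc log (w (1 - σ)) ≤ log (A ^ (n + 1) * w (1 - s)) :=
        log_le_log (hpos _ ⟨by linarith, by linarith⟩)
          (hwσ.trans (doubling_iterate (by linarith) hdoub hs hs1 _))
    _ = log (w (1 - s)) + log A * (1 + n) := by
        rw [log_mul (by positivity) hws.ne', log_pow]; push_cast; ring
    _ ≤ log (w (1 - s)) + log A * (1 + log (s / σ) / log 2) := by
        have := log_nonneg hA
        gcongr

lemma monotoneOn_logProfile (hmono : MonotoneOn w (Ico 0 1))
    (hpos : ∀ r ∈ Ico (0:ℝ) 1, 0 < w r) : MonotoneOn (logProfile w) (Iio 0) := by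
  have hexp : ∀ t ∈ Iio (0:ℝ), exp t ∈ Ico (0:ℝ) 1 :=
    fun t ht => ⟨(exp_pos t).le, exp_lt_one_iff.2 ht⟩
  intro t ht u hu htu
  exact log_le_log (hpos _ (hexp t ht)) (hmono (hexp t ht) (hexp u hu) (exp_le_exp.2 htu))

lemma const_mem_affineMinorants_logProfile (hmono : MonotoneOn w (Ico 0 1))
    (hpos : ∀ r ∈ Ico (0:ℝ) 1, 0 < w r) :
    ((0:ℝ), log (w 0)) ∈ affineMinorants (Iio 0) (logProfile w) := fun u hu => by
  have h0 : (0:ℝ) ∈ Ico 0 1 := ⟨le_rfl, one_pos⟩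
  simpa [logProfile] using log_le_log (hpos 0 h0)
    (hmono h0 ⟨(exp_pos u).le, exp_lt_one_iff.2 hu⟩ (exp_pos u).le)

/-- The slope is that of the tangent at `t` to the concave function
`log A / log 2 * log (1 - exp ·)`. -/
lemma affine_le_logProfile_of_doubling (hmono : MonotoneOn w (Ico 0 1))
    (hpos : ∀ r ∈ Ico (0:ℝ) 1, 0 < w r) (hA : 1 ≤ A)
    (hdoub : ∀ s : ℝ, 0 < s → s ≤ 1 → w (1 - s / 2) ≤ A * w (1 - s))
    {t u : ℝ} (ht : t < 0) (hu : u < 0) :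
    logProfile w t - (log A + log A / log 2) + log A / log 2 * (exp t / (1 - exp t)) * (u - t)
      ≤ logProfile w u := by
  have hL : 0 ≤ log A := log_nonneg hA
  have hK : 0 ≤ log A / log 2 := div_nonneg hL (log_pos one_lt_two).le
  have het : 0 < 1 - exp t := by linarith [exp_lt_one_iff.2 ht]
  rcases lt_or_ge u t with hut | htu
  · have heu : 0 < 1 - exp u := by linarith [exp_lt_one_iff.2 hu]
    have hdoub' := log_le_of_doubling (s := 1 - exp u) hmono hpos hA hdoub het
      (by linarith [exp_lt_exp.2 hut]) (by linarith [exp_pos u])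
    simp only [sub_sub_cancel, log_div heu.ne' het.ne'] at hdoub'
    have htangent := mul_le_mul_of_nonneg_left (log_one_sub_exp_le ht hu) hK
    unfold logProfile
    linear_combination hdoub' + htangent + hK
  · have hslope : -t * (exp t / (1 - exp t)) ≤ 1 := by
      rw [← mul_div_assoc, div_le_one het]
      have := mul_le_mul_of_nonneg_right (add_one_le_exp (-t)) (exp_pos t).le
      rw [← exp_add, neg_add_cancel, exp_zero] at this
      linarith
    have hrise : log A / log 2 * (exp t / (1 - exp t)) * (u - t) ≤ log A / log 2 := by
      have hm : 0 ≤ exp t / (1 - exp t) := by positivity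
      have := mul_le_mul_of_nonneg_left
        (mul_le_mul_of_nonneg_right (by linarith : u - t ≤ -t) hm) hK
      nlinarith
    linarith [monotoneOn_logProfile hmono hpos ht hu htu]

lemma logProfile_le_convexMinorant_add (hmono : MonotoneOn w (Ico 0 1))
    (hpos : ∀ r ∈ Ico (0:ℝ) 1, 0 < w r) (hA : 1 ≤ A)
    (hdoub : ∀ s : ℝ, 0 < s → s ≤ 1 → w (1 - s / 2) ≤ A * w (1 - s)) {t : ℝ} (ht : t < 0) :
    logProfile w t ≤ convexMinorant (Iio 0) (logProfile w) t + (log A + log A / log 2) := by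
  set m := log A / log 2 * (exp t / (1 - exp t))
  have hp : (m, logProfile w t - (log A + log A / log 2) - m * t)
      ∈ affineMinorants (Iio 0) (logProfile w) := fun u hu => by
    convert affine_le_logProfile_of_doubling hmono hpos hA hdoub ht hu using 1
    ring
  have := le_convexMinorant hp (mem_Iio.2 ht)
  simp only at this
  linarith

end Doubling

lemma isWeight_of_le_of_le {w v : ℝ → ℝ} (hw : IsWeight w) (hv : ContinuousOn v (Ioo 0 1))
    (hvmono : MonotoneOn v (Ico 0 1)) (hv0 : v 0 = w 0) (hvw : ∀ r ∈ Ico (0:ℝ) 1, v r ≤ w r)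
    {C : ℝ} (hC : 0 < C) (hwv : ∀ r ∈ Ico (0:ℝ) 1, w r ≤ C * v r) : IsWeight v := by
  obtain ⟨hwcont, -, hwpos, hwunb⟩ := hw
  have h0 : (0:ℝ) ∈ Ico 0 1 := ⟨le_rfl, one_pos⟩
  have hv0_le : ∀ r ∈ Ico (0:ℝ) 1, w 0 ≤ v r := fun r hr => hv0 ▸ hvmono h0 hr hr.1
  refine ⟨?_, hvmono, fun r hr => (hwpos 0 h0).trans_le (hv0_le r hr), fun M => ?_⟩
  · rintro r ⟨hr0, hr1⟩
    rcases hr0.eq_or_lt with rfl | hr0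
    · rw [ContinuousWithinAt, hv0]
      exact tendsto_of_tendsto_of_tendsto_of_le_of_le' tendsto_const_nhds (hwcont 0 h0)
        (eventually_mem_nhdsWithin.mono hv0_le) (eventually_mem_nhdsWithin.mono hvw)
    · exact (hv.continuousAt (Ioo_mem_nhds hr0 hr1)).continuousWithinAt
  · obtain ⟨r, hr, hM⟩ := hwunb (C * M)
    exact ⟨r, hr, lt_of_mul_lt_mul_left (hM.trans_le (hwv r hr)) hC.le⟩

/-- Since `log 0 = 0` in Mathlib, the value at `0` is prescribed separately. -/
def expCompLog (c : ℝ) (ψ : ℝ → ℝ) (r : ℝ) : ℝ := if r ≤ 0 then c else exp (ψ (log r))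

section ExpCompLog

variable {c : ℝ} {ψ : ℝ → ℝ}

lemma expCompLog_zero : expCompLog c ψ 0 = c := if_pos le_rfl

lemma expCompLog_of_pos {r : ℝ} (hr : 0 < r) : expCompLog c ψ r = exp (ψ (log r)) :=
  if_neg hr.not_ge

lemma logProfile_expCompLog : logProfile (expCompLog c ψ) = ψ := by
  ext t
  rw [logProfile, expCompLog_of_pos (exp_pos t), log_exp, log_exp]

lemma isLogConvex_expCompLog (hψ : ConvexOn ℝ (Iio 0) ψ) : IsLogConvex (expCompLog c ψ) := by
  show ConvexOn ℝ (Iio 0) (logProfile _)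
  rwa [logProfile_expCompLog]

lemma continuousOn_expCompLog (hψ : ContinuousOn ψ (Iio 0)) :
    ContinuousOn (expCompLog c ψ) (Ioo 0 1) := by
  have hlog : MapsTo log (Ioo 0 1) (Iio 0) := fun r hr => log_neg hr.1 hr.2
  refine ((hψ.comp (continuousOn_log.mono fun r hr => hr.1.ne') hlog).rexp).congr ?_
  exact fun r hr => expCompLog_of_pos hr.1

lemma monotoneOn_expCompLog (hψ : MonotoneOn ψ (Iio 0)) (hc : ∀ t < 0, c ≤ exp (ψ t)) :
    MonotoneOn (expCompLog c ψ) (Ico 0 1) := by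
  rintro r ⟨hr0, -⟩ s ⟨-, hs1⟩ hrs
  rcases hr0.eq_or_lt with rfl | hr0
  · rcases hrs.eq_or_lt with rfl | hs0
    · rfl
    · rw [expCompLog_zero, expCompLog_of_pos hs0]
      exact hc _ (log_neg hs0 hs1)
  · have hs0 := hr0.trans_le hrs
    rw [expCompLog_of_pos hr0, expCompLog_of_pos hs0]
    exact exp_le_exp.2 (hψ (log_neg hr0 (hrs.trans_lt hs1)) (log_neg hs0 hs1)
      (log_le_log hr0 hrs))

lemma expCompLog_le_and_le {w : ℝ → ℝ} (hpos : ∀ r ∈ Ico (0:ℝ) 1, 0 < w r) {C : ℝ} (hC : 0 ≤ C)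
    (hle : ∀ t < 0, ψ t ≤ logProfile w t) (hge : ∀ t < 0, logProfile w t ≤ ψ t + C)
    {r : ℝ} (hr : r ∈ Ico (0:ℝ) 1) :
    expCompLog (w 0) ψ r ≤ w r ∧ w r ≤ exp C * expCompLog (w 0) ψ r := by
  rcases hr.1.eq_or_lt with rfl | hr0
  · rw [expCompLog_zero]
    exact ⟨le_rfl, le_mul_of_one_le_left (hpos 0 hr).le (one_le_exp hC)⟩
  · have hlog := log_neg hr0 hr.2
    have hwr : exp (logProfile w (log r)) = w r := by
      rw [logProfile, exp_log hr0, exp_log (hpos r hr)]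
    rw [expCompLog_of_pos hr0, ← hwr, ← exp_add, add_comm C]
    exact ⟨exp_le_exp.2 (hle _ hlog), exp_le_exp.2 (hge _ hlog)⟩

end ExpCompLog

theorem stmt17 (w : ℝ → ℝ) (hw : IsWeight w) (A : ℝ) (hA : 1 < A)
    (hdoub : ∀ s : ℝ, 0 < s → s ≤ 1 → w (1 - s/2) ≤ A * w (1 - s)) :
    ∃ v : ℝ → ℝ, IsWeight v ∧ IsLogConvex v ∧ EquivOn01 w v := by
  have ⟨_, hmono, hpos, _⟩ := hw
  have hconst := const_mem_affineMinorants_logProfile hmono hpos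
  have hne : (affineMinorants (Iio 0) (logProfile w)).Nonempty := ⟨_, hconst⟩
  set ψ := convexMinorant (Iio 0) (logProfile w)
  set C := log A + log A / log 2
  have hC : 0 ≤ C := by have := log_pos hA; positivity
  have hψ_conv : ConvexOn ℝ (Iio 0) ψ := convexOn_convexMinorant (convex_Iio 0) hne
  have hψ_mono : MonotoneOn ψ (Iio 0) :=
    monotoneOn_convexMinorant (monotoneOn_logProfile hmono hpos) hne
  have hψ_ge : ∀ t < 0, w 0 ≤ exp (ψ t) := fun t ht => by
    simpa [exp_log (hpos 0 ⟨le_rfl, one_pos⟩)] using exp_le_exp.2 (le_convexMinorant hconst ht)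
  have hbounds := fun r (hr : r ∈ Ico (0:ℝ) 1) => expCompLog_le_and_le hpos hC
    (fun t ht => convexMinorant_le hne ht)
    (fun t ht => logProfile_le_convexMinorant_add hmono hpos hA.le hdoub ht) hr
  refine ⟨expCompLog (w 0) ψ, ?_, isLogConvex_expCompLog hψ_conv,
    1, exp C, one_pos, exp_pos C, fun r hr => ⟨by simpa using (hbounds r hr).1, (hbounds r hr).2⟩⟩
  exact isWeight_of_le_of_le hw (continuousOn_expCompLog (hψ_conv.continuousOn isOpen_Iio))
    (monotoneOn_expCompLog hψ_mono hψ_ge) expCompLog_zero (fun r hr => (hbounds r hr).1)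
    (exp_pos C) (fun r hr => (hbounds r hr).2)
end
end
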